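/- arXiv:2412.17927 — 5 statements merged into one kernel-verified Lean document; each statement's English description precedes it below -/
import Mathlib

section
/- Let $I = [t_0, \infty)$ and suppose $f, g, h : I \to \mathbb{R}$ are continuous functions such that $f$ is bounded, $g$ is non-increasing, $h$ is non-negative and integrable on $I$, and $f(t) \le g(t) + \int_t^\infty h(s) f(s)\, ds$ for all $t \in I$. Then $f(t) \le g(t) \exp\left(\int_t^\infty h(s)\, ds\right)$ for all $t \in I$. -/
/-!
Fix `t` and put `c = g t`, `F s = ∫_s^∞ h f` and `H s = ∫_s^∞ h`. Since `g` is
non-increasing, `f ≤ c + F` on `[t, ∞)`, so `F' = -h f ≥ -h (c + F)`: the function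
`(c + F) e^{-H}` is non-decreasing on `[t, ∞)`. It tends to `c` at infinity, hence
`c + F t ≤ c e^{H t}`, and `f t ≤ c + F t` gives the claim.
-/

open MeasureTheory Set Filter Topology

section TailIntegral

variable {u : ℝ → ℝ} {a : ℝ}

theorem integral_Ioi_eq_sub_intervalIntegral (hu : IntegrableOn u (Ici a)) {x : ℝ}
    (hx : a ≤ x) : ∫ s in Ioi x, u s = (∫ s in Ioi a, u s) - ∫ s in a..x, u s := by
  rw [← intervalIntegral.integral_Ioi_sub_Ioi (hu.mono_set Ioi_subset_Ici_self) hx,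
    sub_sub_cancel]

theorem continuousOn_integral_Ioi (hu : IntegrableOn u (Ici a)) :
    ContinuousOn (fun x => ∫ s in Ioi x, u s) (Ici a) := by
  refine ContinuousOn.congr (f := fun x => (∫ s in Ioi a, u s) - ∫ s in a..x, u s) ?_
    fun x hx => integral_Ioi_eq_sub_intervalIntegral hu hx
  refine continuousOn_const.sub fun x hx => ?_
  have hIcc : Icc a (x + 1) ∈ 𝓝[Ici a] x :=
    mem_of_superset (inter_mem_nhdsWithin _ (Iio_mem_nhds (lt_add_one x)))
      fun y hy => ⟨hy.1, hy.2.le⟩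
  refine (intervalIntegral.continuousWithinAt_primitive (measure_singleton x) ?_)
    |>.mono_of_mem_nhdsWithin hIcc
  have hax : a ≤ x + 1 := le_trans hx (lt_add_one x).le
  rw [min_self, max_eq_right hax]
  exact (intervalIntegrable_iff_integrableOn_Icc_of_le hax).2 (hu.mono_set Icc_subset_Ici_self)

theorem hasDerivAt_integral_Ioi (hu : IntegrableOn u (Ici a)) {x : ℝ} (hx : a < x)
    (hcont : ContinuousAt u x) : HasDerivAt (fun y => ∫ s in Ioi y, u s) (-u x) x := by
  have hprim : HasDerivAt (fun y => ∫ s in a..y, u s) (u x) x :=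
    intervalIntegral.integral_hasDerivAt_right
      ((intervalIntegrable_iff_integrableOn_Icc_of_le hx.le).2 (hu.mono_set Icc_subset_Ici_self))
      ⟨Ioi a, Ioi_mem_nhds hx, (hu.mono_set Ioi_subset_Ici_self).aestronglyMeasurable⟩ hcont
  refine (hprim.const_sub (∫ s in Ioi a, u s)).congr_of_eventuallyEq ?_
  filter_upwards [Ioi_mem_nhds hx] with y hy
  exact integral_Ioi_eq_sub_intervalIntegral hu hy.le

end TailIntegral

theorem add_le_mul_exp_of_le_deriv {F F' H k : ℝ → ℝ} {t c : ℝ}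
    (hFc : ContinuousOn F (Ici t)) (hHc : ContinuousOn H (Ici t))
    (hF : ∀ s ∈ Ioi t, HasDerivAt F (F' s) s) (hH : ∀ s ∈ Ioi t, HasDerivAt H (-k s) s)
    (hF' : ∀ s ∈ Ioi t, -(k s * (c + F s)) ≤ F' s)
    (hF0 : Tendsto F atTop (𝓝 0)) (hH0 : Tendsto H atTop (𝓝 0)) :
    c + F t ≤ c * Real.exp (H t) := by
  set B : ℝ → ℝ := fun s => (c + F s) * Real.exp (-H s)
  have hB : ∀ s ∈ Ioi t, HasDerivAt B ((F' s + k s * (c + F s)) * Real.exp (-H s)) s := by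
    intro s hs
    exact (((hF s hs).const_add c).mul (hH s hs).neg.exp).congr_deriv
      (by simp only [Pi.neg_apply]; ring)
  have hB_mono : MonotoneOn B (Ici t) := by
    refine monotoneOn_of_hasDerivWithinAt_nonneg (convex_Ici t)
      (f' := fun s => (F' s + k s * (c + F s)) * Real.exp (-H s))
      ((continuousOn_const.add hFc).mul hHc.neg.rexp) (fun s hs => ?_) (fun s hs => ?_)
      <;> rw [interior_Ici] at hs
    · exact (hB s hs).hasDerivWithinAt
    · exact mul_nonneg (by linarith [hF' s hs]) (Real.exp_pos _).le
  have hB_lim : Tendsto B atTop (𝓝 c) := by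
    simpa using (hF0.const_add c).mul
      (Real.tendsto_exp_nhds_zero_nhds_one.comp (by simpa using hH0.neg))
  have hBt : B t ≤ c := ge_of_tendsto hB_lim <|
    (eventually_ge_atTop t).mono fun s hs => hB_mono self_mem_Ici hs hs
  calc c + F t = B t * Real.exp (H t) := by simp [B, mul_assoc, ← Real.exp_add]
    _ ≤ c * Real.exp (H t) := by gcongr

theorem stmt_0_general (t₀ : ℝ) (f g h : ℝ → ℝ)
    (hf : ContinuousOn f (Set.Ici t₀))
    (hh : ContinuousOn h (Set.Ici t₀))
    (hbd : ∃ M : ℝ, ∀ t ∈ Set.Ici t₀, |f t| ≤ M)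
    (hmono : AntitoneOn g (Set.Ici t₀))
    (hpos : ∀ t ∈ Set.Ici t₀, 0 ≤ h t)
    (hint : MeasureTheory.IntegrableOn h (Set.Ici t₀))
    (hineq : ∀ t ∈ Set.Ici t₀, f t ≤ g t + ∫ s in Set.Ioi t, h s * f s) :
    ∀ t ∈ Set.Ici t₀, f t ≤ g t * Real.exp (∫ s in Set.Ioi t, h s) := by
  intro t ht
  obtain ⟨M, hM⟩ := hbd
  have hhf : IntegrableOn (fun s => h s * f s) (Ici t₀) :=
    hint.mul_bdd (hf.aestronglyMeasurable measurableSet_Ici)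
      ((ae_restrict_iff' measurableSet_Ici).2 (Eventually.of_forall hM))
  have hIci : Ici t ⊆ Ici t₀ := Ici_subset_Ici.2 ht
  have hIoi : ∀ s ∈ Ioi t, t₀ < s := fun s hs => ht.trans_lt hs
  have hineq_const : ∀ s ∈ Ioi t,
      -(h s * (g t + ∫ r in Ioi s, h r * f r)) ≤ -(h s * f s) := by
    intro s hs
    have hs₀ : s ∈ Ici t₀ := (hIoi s hs).le
    refine neg_le_neg (mul_le_mul_of_nonneg_left ((hineq s hs₀).trans ?_) (hpos s hs₀))
    gcongr
    exact hmono ht hs₀ (le_of_lt hs)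
  refine (hineq t ht).trans (add_le_mul_exp_of_le_deriv
    ((continuousOn_integral_Ioi hhf).mono hIci) ((continuousOn_integral_Ioi hint).mono hIci)
    (fun s hs => hasDerivAt_integral_Ioi hhf (hIoi s hs)
      ((hh.mul hf).continuousAt (Ici_mem_nhds (hIoi s hs))))
    (fun s hs => hasDerivAt_integral_Ioi hint (hIoi s hs)
      (hh.continuousAt (Ici_mem_nhds (hIoi s hs))))
    hineq_const (tendsto_integral_Ioi_zero tendsto_id) (tendsto_integral_Ioi_zero tendsto_id))

/-- Grönwall inequality on a half-infinite interval: if `f` is bounded and continuous,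
`g` is continuous and non-increasing, `h` is continuous, non-negative and integrable on
`[t₀, ∞)`, and `f t ≤ g t + ∫_t^∞ h s f s ds`, then
`f t ≤ g t * exp (∫_t^∞ h s ds)` on `[t₀, ∞)`. -/
theorem stmt_0 (t₀ : ℝ) (f g h : ℝ → ℝ)
    (hf : ContinuousOn f (Set.Ici t₀))
    (hg : ContinuousOn g (Set.Ici t₀))
    (hh : ContinuousOn h (Set.Ici t₀))
    (hbd : ∃ M : ℝ, ∀ t ∈ Set.Ici t₀, |f t| ≤ M)
    (hmono : AntitoneOn g (Set.Ici t₀))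
    (hpos : ∀ t ∈ Set.Ici t₀, 0 ≤ h t)
    (hint : MeasureTheory.IntegrableOn h (Set.Ici t₀))
    (hineq : ∀ t ∈ Set.Ici t₀, f t ≤ g t + ∫ s in Set.Ioi t, h s * f s) :
    ∀ t ∈ Set.Ici t₀, f t ≤ g t * Real.exp (∫ s in Set.Ioi t, h s) :=
  stmt_0_general t₀ f g h hf hh hbd hmono hpos hint hineq
end

section
/- Let $a \in \mathbb{R}$ and $1 \le v_1 < v_2$. For a $C^1$ function $f$ of $v$ and a positive $C^1$ function $r$ of $v$ with $\lambda := r' > 0$, the following identity holds: $\frac{(a+1)^2}{4} \int_{v_1}^{v_2} r^a \lambda f^2\, dv + \int_{v_1}^{v_2} \frac{r^a}{\lambda} \left( r f' + \frac{a+1}{2} \lambda f \right)^2 dv + \frac{a+1}{2} r^{1+a} f^2|_{v_1} = \int_{v_1}^{v_2} \frac{r^{2+a}}{\lambda} (f')^2\, dv + \frac{a+1}{2} r^{1+a} f^2|_{v_2}$. -/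
open MeasureTheory Set

/-! Expanding the square,
`(r^a/λ)(r f' + c λ f)² = (r^{2+a}/λ) f'² + c (2 r^{1+a} f f') + c² r^a λ f²`
with `c = (a+1)/2`; since `2c² = c (1+a)`, adding `c² r^a λ f²` turns the last two terms
into `c (r^{1+a} f²)'`. Integrating this pointwise identity over `[v₁, v₂]` and applying the
fundamental theorem of calculus to `r^{1+a} f²` gives the boundary terms. -/

lemma hasDerivAt_rpow_mul_sq {r f : ℝ → ℝ} {l f' v : ℝ} (a : ℝ)
    (hr : HasDerivAt r l v) (hf : HasDerivAt f f' v) (hr0 : r v ≠ 0) :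
    HasDerivAt (fun v => r v ^ (1 + a) * f v ^ 2)
      ((1 + a) * r v ^ a * l * f v ^ 2 + 2 * r v ^ (1 + a) * f v * f') v := by
  refine ((hr.rpow_const (p := 1 + a) (Or.inl hr0)).fun_mul (hf.fun_pow 2)).congr_deriv ?_
  simp only [add_sub_cancel_left, Nat.cast_ofNat, Nat.add_one_sub_one, pow_one]
  ring

lemma hardy_integrand_identity (a r l f f' : ℝ) (hr : 0 < r) (hl : l ≠ 0) :
    ((a + 1) / 2) ^ 2 * (r ^ a * l * f ^ 2) + r ^ a / l * (r * f' + (a + 1) / 2 * l * f) ^ 2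
      = r ^ (2 + a) / l * f' ^ 2
        + (a + 1) / 2 * ((1 + a) * r ^ a * l * f ^ 2 + 2 * r ^ (1 + a) * f * f') := by
  rw [Real.rpow_add hr, Real.rpow_add hr, Real.rpow_two, Real.rpow_one]
  field_simp
  ring

theorem stmt_5_general (a v₁ v₂ : ℝ) (hv : v₁ < v₂)
    (f f' r l : ℝ → ℝ)
    (hf : ∀ v ∈ Set.Icc v₁ v₂, HasDerivAt f (f' v) v)
    (hr : ∀ v ∈ Set.Icc v₁ v₂, HasDerivAt r (l v) v)
    (hrpos : ∀ v ∈ Set.Icc v₁ v₂, 0 < r v)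
    (hlpos : ∀ v ∈ Set.Icc v₁ v₂, 0 < l v)
    (hf'c : ContinuousOn f' (Set.Icc v₁ v₂))
    (hlc : ContinuousOn l (Set.Icc v₁ v₂)) :
    (a + 1) ^ 2 / 4 * (∫ v in v₁..v₂, r v ^ a * l v * f v ^ 2)
      + (∫ v in v₁..v₂, r v ^ a / l v * (r v * f' v + (a + 1) / 2 * l v * f v) ^ 2)
      + (a + 1) / 2 * r v₁ ^ (1 + a) * f v₁ ^ 2
    = (∫ v in v₁..v₂, r v ^ (2 + a) / l v * f' v ^ 2)
      + (a + 1) / 2 * r v₂ ^ (1 + a) * f v₂ ^ 2 := by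
  rw [← uIcc_of_le hv.le] at *
  have hrc : ContinuousOn r (uIcc v₁ v₂) :=
    fun v hv => (hr v hv).continuousAt.continuousWithinAt
  have hfc : ContinuousOn f (uIcc v₁ v₂) :=
    fun v hv => (hf v hv).continuousAt.continuousWithinAt
  have hr0 : ∀ v ∈ uIcc v₁ v₂, r v ≠ 0 := fun v hv => (hrpos v hv).ne'
  have hl0 : ∀ v ∈ uIcc v₁ v₂, l v ≠ 0 := fun v hv => (hlpos v hv).ne'
  have hrpow (p : ℝ) : ContinuousOn (fun v => r v ^ p) (uIcc v₁ v₂) :=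
    hrc.rpow_const fun v hv => Or.inl (hr0 v hv)
  have hFTC :
      ∫ v in v₁..v₂, ((1 + a) * r v ^ a * l v * f v ^ 2 + 2 * r v ^ (1 + a) * f v * f' v) =
        r v₂ ^ (1 + a) * f v₂ ^ 2 - r v₁ ^ (1 + a) * f v₁ ^ 2 :=
    intervalIntegral.integral_eq_sub_of_hasDerivAt
      (fun v hv => hasDerivAt_rpow_mul_sq a (hr v hv) (hf v hv) (hr0 v hv))
      (ContinuousOn.intervalIntegrable (by fun_prop))
  have hintegrated := intervalIntegral.integral_congr (μ := volume) fun v hv =>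
    hardy_integrand_identity a (r v) (l v) (f v) (f' v) (hrpos v hv) (hl0 v hv)
  rw [intervalIntegral.integral_add, intervalIntegral.integral_add,
    intervalIntegral.integral_const_mul, intervalIntegral.integral_const_mul, hFTC] at hintegrated
  · linear_combination hintegrated
  all_goals exact ContinuousOn.intervalIntegrable (by fun_prop (disch := assumption))

/-- Sharp Hardy inequality in completed-square form: for a `C¹` function `f` of `v` and a
positive `C¹` function `r` of `v` with `λ = r' > 0`,
`((a+1)²/4) ∫ r^a λ f² + ∫ (r^a/λ)(r f' + ((a+1)/2) λ f)² + ((a+1)/2) r^{1+a} f²|_{v₁}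
  = ∫ (r^{2+a}/λ)(f')² + ((a+1)/2) r^{1+a} f²|_{v₂}`. -/
theorem stmt_5 (a v₁ v₂ : ℝ) (hv₁ : 1 ≤ v₁) (hv : v₁ < v₂)
    (f f' r l : ℝ → ℝ)
    (hf : ∀ v ∈ Set.Icc v₁ v₂, HasDerivAt f (f' v) v)
    (hr : ∀ v ∈ Set.Icc v₁ v₂, HasDerivAt r (l v) v)
    (hrpos : ∀ v ∈ Set.Icc v₁ v₂, 0 < r v)
    (hlpos : ∀ v ∈ Set.Icc v₁ v₂, 0 < l v)
    (hf'c : ContinuousOn f' (Set.Icc v₁ v₂))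
    (hlc : ContinuousOn l (Set.Icc v₁ v₂)) :
    (a + 1) ^ 2 / 4 * (∫ v in v₁..v₂, r v ^ a * l v * f v ^ 2)
      + (∫ v in v₁..v₂, r v ^ a / l v * (r v * f' v + (a + 1) / 2 * l v * f v) ^ 2)
      + (a + 1) / 2 * r v₁ ^ (1 + a) * f v₁ ^ 2
    = (∫ v in v₁..v₂, r v ^ (2 + a) / l v * f' v ^ 2)
      + (a + 1) / 2 * r v₂ ^ (1 + a) * f v₂ ^ 2 :=
  stmt_5_general a v₁ v₂ hv f f' r l hf hr hrpos hlpos hf'c hlc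
end

section
/- Let $\psi : [1, u] \times \{v\} \to \mathbb{R}$ be $C^1$ in the first variable, let $r : [1,u] \to (0,\infty)$ be $C^1$ and non-increasing with $r(1) \ge 1$, and let $\nu := r' < 0$. Suppose $|\psi(1)| \le r(1)^{-1} D$ and $\int_1^u \frac{r^2}{(-\nu)} (\psi')^2\, du' \le E^2$. Then $|\psi(u)| \le r(u)^{-1/2}(D + E)$. -/
open MeasureTheory Set

/-!
Write `ψ u - ψ 1 = ∫ ψ'` and apply Cauchy–Schwarz with the weight `w = r² / (-ν)`. Since
`(1 / r)' = -ν / r²`, the dual factor is `∫ w⁻¹ = r(u)⁻¹ - r(1)⁻¹ ≤ r(u)⁻¹`. As `ν < 0`, `r` is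
antitone, so `r(1)⁻¹ ≤ r(1)^{-1/2} ≤ r(u)^{-1/2}` (using `r(1) ≥ 1`) controls the initial term.
-/

theorem integral_abs_le_sqrt_mul_sqrt {α : Type*} [MeasurableSpace α] {μ : Measure α}
    {f w : α → ℝ} (hf : AEStronglyMeasurable f μ) (hw : AEStronglyMeasurable w μ)
    (hw_pos : ∀ᵐ x ∂μ, 0 < w x) (hwf : Integrable (fun x ↦ w x * f x ^ 2) μ)
    (hw_inv : Integrable (fun x ↦ (w x)⁻¹) μ) :
    ∫ x, |f x| ∂μ ≤ √(∫ x, w x * f x ^ 2 ∂μ) * √(∫ x, (w x)⁻¹ ∂μ) := by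
  have hsqrt_w : AEStronglyMeasurable (fun x ↦ √(w x)) μ :=
    Real.continuous_sqrt.comp_aestronglyMeasurable hw
  have hF_sq : (fun x ↦ w x * f x ^ 2) =ᵐ[μ] fun x ↦ (√(w x) * f x) ^ 2 := by
    filter_upwards [hw_pos] with x hx
    rw [mul_pow, Real.sq_sqrt hx.le]
  have hG_sq : (fun x ↦ (w x)⁻¹) =ᵐ[μ] fun x ↦ (√(w x))⁻¹ ^ 2 := by
    filter_upwards [hw_pos] with x hx
    rw [inv_pow, Real.sq_sqrt hx.le]
  have hF : MemLp (fun x ↦ √(w x) * f x) (ENNReal.ofReal 2) μ := by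
    rw [ENNReal.ofReal_ofNat]
    exact (memLp_two_iff_integrable_sq (hsqrt_w.mul hf)).2 (hwf.congr hF_sq)
  have hG : MemLp (fun x ↦ (√(w x))⁻¹) (ENNReal.ofReal 2) μ := by
    rw [ENNReal.ofReal_ofNat]
    exact (memLp_two_iff_integrable_sq hsqrt_w.aemeasurable.inv.aestronglyMeasurable).2
      (hw_inv.congr hG_sq)
  have hFG : (fun x ↦ |f x|) =ᵐ[μ] fun x ↦ |√(w x) * f x| * |(√(w x))⁻¹| := by
    filter_upwards [hw_pos] with x hx
    have : √(w x) ≠ 0 := (Real.sqrt_pos.2 hx).ne'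
    rw [← abs_mul]
    field_simp
  have holder := integral_mul_norm_le_Lp_mul_Lq Real.HolderConjugate.two_two hF hG
  simp only [Real.norm_eq_abs, Real.rpow_two, sq_abs, ← Real.sqrt_eq_rpow] at holder
  rwa [integral_congr_ae hFG, integral_congr_ae hF_sq, integral_congr_ae hG_sq]

theorem abs_sub_le_sqrt_weighted_integral_mul_sqrt {a b : ℝ} (hab : a ≤ b) {ψ ψ' w : ℝ → ℝ}
    (hψ : ∀ t ∈ Icc a b, HasDerivAt ψ (ψ' t) t) (hψ' : ContinuousOn ψ' (Icc a b))
    (hw : ContinuousOn w (Icc a b)) (hw_pos : ∀ t ∈ Icc a b, 0 < w t) :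
    |ψ b - ψ a| ≤ √(∫ t in a..b, w t * ψ' t ^ 2) * √(∫ t in a..b, (w t)⁻¹) := by
  have hw_ne : ∀ t ∈ Icc a b, w t ≠ 0 := fun t ht ↦ (hw_pos t ht).ne'
  have hftc : ∫ t in a..b, ψ' t = ψ b - ψ a :=
    intervalIntegral.integral_eq_sub_of_hasDerivAt (by rwa [uIcc_of_le hab])
      (hψ'.intervalIntegrable_of_Icc hab)
  have hμ_pos : ∀ᵐ t ∂volume.restrict (Ioc a b), 0 < w t :=
    ae_restrict_of_forall_mem measurableSet_Ioc fun t ht ↦ hw_pos t (Ioc_subset_Icc_self ht)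
  have hint : ∀ {g : ℝ → ℝ}, ContinuousOn g (Icc a b) → IntegrableOn g (Ioc a b) :=
    fun hg ↦ hg.integrableOn_Icc.mono_set Ioc_subset_Icc_self
  rw [← hftc]
  refine (intervalIntegral.abs_integral_le_integral_abs hab).trans ?_
  simp only [intervalIntegral.integral_of_le hab]
  exact integral_abs_le_sqrt_mul_sqrt
    (hint hψ').aestronglyMeasurable (hint hw).aestronglyMeasurable hμ_pos
    (hint (hw.mul (hψ'.pow 2))) (hint (hw.inv₀ hw_ne))

theorem integral_neg_deriv_div_sq {a b : ℝ} {r ν : ℝ → ℝ}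
    (hr : ∀ t ∈ uIcc a b, HasDerivAt r (ν t) t) (hr_ne : ∀ t ∈ uIcc a b, r t ≠ 0)
    (hν : ContinuousOn ν (uIcc a b)) :
    ∫ t in a..b, -ν t / r t ^ 2 = (r b)⁻¹ - (r a)⁻¹ := by
  have hr_cont : ContinuousOn r (uIcc a b) :=
    fun t ht ↦ (hr t ht).continuousAt.continuousWithinAt
  exact intervalIntegral.integral_eq_sub_of_hasDerivAt (fun t ht ↦ (hr t ht).inv (hr_ne t ht))
    (hν.neg.div (hr_cont.pow 2) fun t ht ↦ pow_ne_zero 2 (hr_ne t ht)).intervalIntegrable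

theorem abs_sub_le_sqrt_weighted_integral_mul_sqrt_inv_sub_inv {a b : ℝ} (hab : a ≤ b)
    {ψ ψ' r ν : ℝ → ℝ} (hψ : ∀ t ∈ Icc a b, HasDerivAt ψ (ψ' t) t)
    (hψ' : ContinuousOn ψ' (Icc a b)) (hr : ∀ t ∈ Icc a b, HasDerivAt r (ν t) t)
    (hν : ∀ t ∈ Icc a b, ν t < 0) (hr_pos : ∀ t ∈ Icc a b, 0 < r t)
    (hν_cont : ContinuousOn ν (Icc a b)) :
    |ψ b - ψ a| ≤ √(∫ t in a..b, r t ^ 2 / -ν t * ψ' t ^ 2) * √((r b)⁻¹ - (r a)⁻¹) := by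
  have hr_cont : ContinuousOn r (Icc a b) :=
    fun t ht ↦ (hr t ht).continuousAt.continuousWithinAt
  have hν_pos : ∀ t ∈ Icc a b, 0 < -ν t := fun t ht ↦ neg_pos.2 (hν t ht)
  have hr_inv : ∫ t in a..b, (r t ^ 2 / -ν t)⁻¹ = (r b)⁻¹ - (r a)⁻¹ := by
    simp only [inv_div]
    rw [← uIcc_of_le hab] at hr hr_pos hν_cont
    exact integral_neg_deriv_div_sq hr (fun t ht ↦ (hr_pos t ht).ne') hν_cont
  rw [← hr_inv]
  exact abs_sub_le_sqrt_weighted_integral_mul_sqrt hab hψ hψ'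
    ((hr_cont.pow 2).div hν_cont.neg fun t ht ↦ (hν_pos t ht).ne')
    fun t ht ↦ div_pos (pow_pos (hr_pos t ht) 2) (hν_pos t ht)

theorem stmt_9_general (u D E : ℝ) (hu : 1 ≤ u) (hE : 0 ≤ E)
    (ψ ψ' r ν : ℝ → ℝ)
    (hψ : ∀ t ∈ Set.Icc (1 : ℝ) u, HasDerivAt ψ (ψ' t) t)
    (hr : ∀ t ∈ Set.Icc (1 : ℝ) u, HasDerivAt r (ν t) t)
    (hν : ∀ t ∈ Set.Icc (1 : ℝ) u, ν t < 0)
    (hrpos : ∀ t ∈ Set.Icc (1 : ℝ) u, 0 < r t)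
    (hr1 : 1 ≤ r 1)
    (hψ'c : ContinuousOn ψ' (Set.Icc (1 : ℝ) u))
    (hνc : ContinuousOn ν (Set.Icc (1 : ℝ) u))
    (hinit : |ψ 1| ≤ (r 1)⁻¹ * D)
    (hen : ∫ t in (1 : ℝ)..u, (r t) ^ 2 / (-ν t) * (ψ' t) ^ 2 ≤ E ^ 2) :
    |ψ u| ≤ (r u) ^ (-(1/2) : ℝ) * (D + E) := by
  have hmem_u : u ∈ Icc 1 u := ⟨hu, le_rfl⟩
  have hru : 0 < r u := hrpos u hmem_u
  have hr_le : r u ≤ r 1 := by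
    have hr_anti : AntitoneOn r (Icc 1 u) :=
      antitoneOn_of_deriv_nonpos (convex_Icc 1 u)
        (fun t ht ↦ (hr t ht).continuousAt.continuousWithinAt)
        (fun t ht ↦ (hr t (interior_subset ht)).differentiableAt.differentiableWithinAt)
        fun t ht ↦ (hr t (interior_subset ht)).deriv ▸ (hν t (interior_subset ht)).le
    exact hr_anti ⟨le_rfl, hu⟩ hmem_u hu
  have hosc : |ψ u - ψ 1| ≤ E * √((r u)⁻¹ - (r 1)⁻¹) :=
    calc |ψ u - ψ 1| ≤ √(E ^ 2) * √((r u)⁻¹ - (r 1)⁻¹) :=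
          (abs_sub_le_sqrt_weighted_integral_mul_sqrt_inv_sub_inv hu hψ hψ'c hr hν hrpos
            hνc).trans (by gcongr)
      _ = E * √((r u)⁻¹ - (r 1)⁻¹) := by rw [Real.sqrt_sq hE]
  have hD : 0 ≤ D := (mul_nonneg_iff_of_pos_left (by positivity)).1 ((abs_nonneg _).trans hinit)
  have hinv_r1 : (r 1)⁻¹ ≤ √(r u)⁻¹ :=
    (Real.le_sqrt_self_iff.2 (inv_le_one_of_one_le₀ hr1)).trans
      (Real.sqrt_le_sqrt (inv_anti₀ hru hr_le))
  have hrpow : (r u) ^ (-(1/2) : ℝ) = √(r u)⁻¹ := by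
    rw [Real.sqrt_eq_rpow, Real.inv_rpow hru.le, Real.rpow_neg hru.le]
  calc |ψ u| ≤ |ψ 1| + |ψ u - ψ 1| := by linarith [abs_sub_abs_le_abs_sub (ψ u) (ψ 1)]
    _ ≤ (r 1)⁻¹ * D + E * √((r u)⁻¹ - (r 1)⁻¹) := add_le_add hinit hosc
    _ ≤ √(r u)⁻¹ * D + E * √(r u)⁻¹ := by
        gcongr
        linarith [inv_nonneg.2 (zero_le_one.trans hr1)]
    _ = (r u) ^ (-(1/2) : ℝ) * (D + E) := by rw [hrpow]; ring

/-- Weighted fundamental-theorem-of-calculus plus Cauchy–Schwarz estimate: if `ψ` is `C¹`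
on `[1,u]`, `r` is `C¹`, positive, non-increasing with `r(1) ≥ 1` and `ν = r' < 0`,
`|ψ(1)| ≤ r(1)⁻¹ D` and `∫_1^u (r²/(-ν)) (ψ')² ≤ E²`, then
`|ψ(u)| ≤ r(u)^{-1/2} (D + E)`. -/
theorem stmt_9 (u D E : ℝ) (hu : 1 ≤ u) (hE : 0 ≤ E)
    (ψ ψ' r ν : ℝ → ℝ)
    (hψ : ∀ t ∈ Set.Icc (1 : ℝ) u, HasDerivAt ψ (ψ' t) t)
    (hr : ∀ t ∈ Set.Icc (1 : ℝ) u, HasDerivAt r (ν t) t)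
    (hν : ∀ t ∈ Set.Icc (1 : ℝ) u, ν t < 0)
    (hrpos : ∀ t ∈ Set.Icc (1 : ℝ) u, 0 < r t)
    (hrmono : AntitoneOn r (Set.Icc (1 : ℝ) u))
    (hr1 : 1 ≤ r 1)
    (hψ'c : ContinuousOn ψ' (Set.Icc (1 : ℝ) u))
    (hνc : ContinuousOn ν (Set.Icc (1 : ℝ) u))
    (hinit : |ψ 1| ≤ (r 1)⁻¹ * D)
    (hen : ∫ t in (1 : ℝ)..u, (r t) ^ 2 / (-ν t) * (ψ' t) ^ 2 ≤ E ^ 2) :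
    |ψ u| ≤ (r u) ^ (-(1/2) : ℝ) * (D + E) :=
  stmt_9_general u D E hu hE ψ ψ' r ν hψ hr hν hrpos hr1 hψ'c hνc hinit hen
end

section
/- Let $r : [u, \infty) \to (0, \infty)$ be $C^1$, non-increasing, with derivative $\nu < 0$, and fix $v$ with $r(u) \le v$. Let $\psi$ be $C^1$. Define $u_* \ge u$ by $r(u_*) = v/2$ if such a point exists, else $u_* = u$. Suppose $\sup_{u' }\int \frac{r^2}{(-\nu)}(\partial_u \psi)^2 \le \mathcal{E}_0^2$ on $[u, u_*]$, $\int_{u_*}^\infty \frac{r^2}{(-\nu)}(\partial_u\psi)^2 \le \tau_*^{-1} \mathcal{E}_1^2$ with $\tau_* \ge c v$ for some $c > 0$, and $r \ge r_{\min} > 0$ everywhere. Then $\int_u^\infty \frac{r}{(-\nu)}(\partial_u \psi)^2\, du' \le 2 v^{-1} \mathcal{E}_0^2 + c^{-1} r_{\min}^{-1} v^{-1} \mathcal{E}_1^2$. -/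
open MeasureTheory Set

/-! Split `(u, ∞)` at `u_*`. On `(u, u_*]` monotonicity gives `r ≥ r(u_*) = v/2`, so the
`r`-weighted flux is at most `2/v` times the `r²`-weighted energy; on `(u_*, ∞)` we only
have `r ≥ r_min`, which costs `r_min⁻¹`, and the energy there carries the factor
`τ⁻¹ ≤ (c v)⁻¹`. -/

theorem setIntegral_le_inv_mul_setIntegral_of_le_weight {α : Type*} [MeasurableSpace α]
    {μ : Measure α} {s : Set α} (hs : MeasurableSet s) {w g : α → ℝ} {a : ℝ} (ha : 0 < a)
    (hg : ∀ x ∈ s, 0 ≤ g x) (hw : ∀ x ∈ s, a ≤ w x)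
    (hwg : IntegrableOn (fun x => w x * g x) s μ) :
    ∫ x in s, g x ∂μ ≤ a⁻¹ * ∫ x in s, w x * g x ∂μ := by
  rw [← integral_const_mul]
  refine integral_mono_of_nonneg (ae_restrict_of_forall_mem hs hg) (hwg.const_mul _)
    (ae_restrict_of_forall_mem hs fun x hx => ?_)
  calc g x = a⁻¹ * (a * g x) := by field_simp
    _ ≤ a⁻¹ * (w x * g x) := by gcongr; exacts [hg x hx, hw x hx]

theorem IntegrableOn.mul_of_antitoneOn {s : Set ℝ} {a : ℝ} (hs : MeasurableSet s)
    (hsub : s ⊆ Ici a) {w g : ℝ → ℝ} (hw : AntitoneOn w (Ici a)) (hw0 : ∀ x ∈ s, 0 ≤ w x)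
    (hg : IntegrableOn g s) : IntegrableOn (fun x => w x * g x) s := by
  refine hg.bdd_mul (c := w a)
    (aemeasurable_restrict_of_antitoneOn hs (hw.mono hsub)).aestronglyMeasurable
    (ae_restrict_of_forall_mem hs fun x hx => ?_)
  rw [Real.norm_of_nonneg (hw0 x hx)]
  exact hw self_mem_Ici (hsub hx) (hsub hx)

theorem setIntegral_flux_le_inv_mul_energy {r ν ψ' : ℝ → ℝ} {u a E : ℝ} {s : Set ℝ}
    (hs : MeasurableSet s) (hsub : s ⊆ Ici u) (ha : 0 < a) (hν : ∀ t ∈ s, ν t < 0)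
    (hrmono : AntitoneOn r (Ici u)) (hra : ∀ t ∈ s, a ≤ r t)
    (hflux : IntegrableOn (fun t => r t / (-ν t) * ψ' t ^ 2) s)
    (henergy : ∫ t in s, r t ^ 2 / (-ν t) * ψ' t ^ 2 ≤ E) :
    ∫ t in s, r t / (-ν t) * ψ' t ^ 2 ≤ a⁻¹ * E := by
  have hr0 : ∀ t ∈ s, 0 ≤ r t := fun t ht => ha.le.trans (hra t ht)
  have hflux0 : ∀ t ∈ s, 0 ≤ r t / (-ν t) * ψ' t ^ 2 := fun t ht =>
    have := neg_pos.2 (hν t ht); have := hr0 t ht; by positivity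
  have hsplit : (fun t => r t ^ 2 / (-ν t) * ψ' t ^ 2)
      = fun t => r t * (r t / (-ν t) * ψ' t ^ 2) := by
    ext t; ring
  rw [hsplit] at henergy
  -- `r ≤ r u` makes the energy integrable, so `henergy` is not a bound on a junk value.
  calc _ ≤ a⁻¹ * ∫ t in s, r t * (r t / (-ν t) * ψ' t ^ 2) :=
        setIntegral_le_inv_mul_setIntegral_of_le_weight hs ha hflux0 hra
          (IntegrableOn.mul_of_antitoneOn hs hsub hrmono hr0 hflux)
    _ ≤ a⁻¹ * E := by gcongr

theorem stmt_15_general (u v ustar c rmin τ E₀ E₁ : ℝ)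
    (hc : 0 < c) (hrmin : 0 < rmin) (hτ : c * v ≤ τ)
    (r ν ψ' : ℝ → ℝ)
    (hν : ∀ t ≥ u, ν t < 0)
    (hrmono : AntitoneOn r (Set.Ici u))
    (hrb : ∀ t ≥ u, rmin ≤ r t)
    (hru : r u ≤ v)
    (hust : u ≤ ustar)
    (hdef : r ustar = v / 2 ∨ ustar = u)
    (h1 : ∫ t in Set.Ioc u ustar, (r t) ^ 2 / (-ν t) * (ψ' t) ^ 2 ≤ E₀ ^ 2)
    (h2 : ∫ t in Set.Ioi ustar, (r t) ^ 2 / (-ν t) * (ψ' t) ^ 2 ≤ τ⁻¹ * E₁ ^ 2) :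
    ∫ t in Set.Ioi u, r t / (-ν t) * (ψ' t) ^ 2
      ≤ 2 * v⁻¹ * E₀ ^ 2 + c⁻¹ * rmin⁻¹ * v⁻¹ * E₁ ^ 2 := by
  have hv : 0 < v := hrmin.trans_le ((hrb u le_rfl).trans hru)
  by_cases hflux : IntegrableOn (fun t => r t / (-ν t) * ψ' t ^ 2) (Ioi u)
  swap
  · rw [integral_undef hflux]; positivity
  have hIoc : Ioc u ustar ⊆ Ici u := fun t ht => le_of_lt ht.1
  have hIoi : Ioi ustar ⊆ Ici u := fun t ht => hust.trans (le_of_lt ht)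
  have hinner : ∀ t ∈ Ioc u ustar, v / 2 ≤ r t := by
    rcases hdef with hdef | rfl
    · exact fun t ht => hdef ▸ hrmono (hIoc ht) hust ht.2
    · simp
  rw [← Ioc_union_Ioi_eq_Ioi hust, setIntegral_union (Ioc_disjoint_Ioi le_rfl) measurableSet_Ioi
    (hflux.mono_set Ioc_subset_Ioi_self) (hflux.mono_set (Ioi_subset_Ioi hust))]
  gcongr ?_ + ?_
  · calc _ ≤ (v / 2)⁻¹ * E₀ ^ 2 :=
          setIntegral_flux_le_inv_mul_energy measurableSet_Ioc hIoc (by positivity)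
            (fun t ht => hν t (hIoc ht)) hrmono hinner (hflux.mono_set Ioc_subset_Ioi_self) h1
      _ = 2 * v⁻¹ * E₀ ^ 2 := by ring
  · calc _ ≤ rmin⁻¹ * (τ⁻¹ * E₁ ^ 2) :=
          setIntegral_flux_le_inv_mul_energy measurableSet_Ioi hIoi hrmin
            (fun t ht => hν t (hIoi ht)) hrmono (fun t ht => hrb t (hIoi ht))
            (hflux.mono_set (Ioi_subset_Ioi hust)) h2
      _ ≤ rmin⁻¹ * ((c * v)⁻¹ * E₁ ^ 2) := by gcongr
      _ = c⁻¹ * rmin⁻¹ * v⁻¹ * E₁ ^ 2 := by ring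

/-- Splitting argument for `v⁻¹`-decay of the `r`-weighted flux of `∂_u ψ`: split the
integration range at the point `u_*` where `r = v/2` (if it exists, else `u_* = u`);
use the `r²`-weighted energy in the inner region and the `τ`-decaying weighted energy
(with `τ_* ≥ c v`) in the outer region. -/
theorem stmt_15 (u v ustar c rmin τ E₀ E₁ : ℝ)
    (hc : 0 < c) (hrmin : 0 < rmin) (hτpos : 0 < τ) (hτ : c * v ≤ τ)
    (r ν ψ ψ' : ℝ → ℝ)
    (hr : ∀ t ≥ u, HasDerivAt r (ν t) t)
    (hν : ∀ t ≥ u, ν t < 0)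
    (hrmono : AntitoneOn r (Set.Ici u))
    (hrb : ∀ t ≥ u, rmin ≤ r t)
    (hψ : ∀ t ≥ u, HasDerivAt ψ (ψ' t) t)
    (hru : r u ≤ v)
    (hust : u ≤ ustar)
    (hdef : r ustar = v / 2 ∨ ustar = u)
    (h1 : ∫ t in Set.Ioc u ustar, (r t) ^ 2 / (-ν t) * (ψ' t) ^ 2 ≤ E₀ ^ 2)
    (h2 : ∫ t in Set.Ioi ustar, (r t) ^ 2 / (-ν t) * (ψ' t) ^ 2 ≤ τ⁻¹ * E₁ ^ 2) :
    ∫ t in Set.Ioi u, r t / (-ν t) * (ψ' t) ^ 2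
      ≤ 2 * v⁻¹ * E₀ ^ 2 + c⁻¹ * rmin⁻¹ * v⁻¹ * E₁ ^ 2 :=
  stmt_15_general u v ustar c rmin τ E₀ E₁ hc hrmin hτ r ν ψ' hν hrmono hrb hru hust hdef h1 h2
end

section
/- Let $p > 0$ and let $\psi, r, \lambda, \nu$ be smooth on a region with $\lambda > 0$, $\nu < 0$. Suppose the wave-type identity $\partial_u \partial_v (r\psi) = r\kappa(-\nu)\Box\psi - \frac{2(\varpi - \mathbf{e}^2/r)}{r^2}\kappa(-\nu)\psi$ holds with $\Box\psi = 0$, and that $\kappa \le C_0$, $\varpi - \mathbf{e}^2/r$ bounded by $C_0$, $(-\nu) > 0$, $r$ is non-increasing in $u$ with $r \ge r_{\min} > 0$, and $|\psi| \le r^{-1/2} P$ pointwise. Then $|\partial_v(r\psi)(u,v)| \le |\partial_v(r\psi)(1,v)| + C C_0^2 P\, r(u,v)^{-3/2}$, where $C$ is numerical. -/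
open Set

/-!
The bounds on `κ`, `ϖ - e²/r` and `ψ` give `|∂_u Φ| ≤ 2 C₀² P (-ν) r^{-5/2}`. As `ν = ∂_u r`, the
right-hand side is the `u`-derivative of `(4/3) C₀² P r^{-3/2}`, and comparing `Φ` with this
primitive plays the role of the change of variables `(-ν) du = dr`.
-/

theorem norm_image_sub_le_of_norm_deriv_le_deriv {E : Type*} [NormedAddCommGroup E]
    [NormedSpace ℝ E] {f f' : ℝ → E} {g g' : ℝ → ℝ} {a b : ℝ}
    (hf : ∀ x ∈ Icc a b, HasDerivAt f (f' x) x) (hg : ∀ x ∈ Icc a b, HasDerivAt g (g' x) x)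
    (bound : ∀ x ∈ Icc a b, ‖f' x‖ ≤ g' x) :
    ∀ x ∈ Icc a b, ‖f x - f a‖ ≤ g x - g a := by
  refine image_norm_le_of_norm_deriv_right_le_deriv_boundary' (f' := f') (B' := g')
    (fun x hx => ((hf x hx).sub_const (f a)).continuousAt.continuousWithinAt)
    (fun x hx => ((hf x (Ico_subset_Icc_self hx)).sub_const (f a)).hasDerivWithinAt)
    (by simp) (fun x hx => ((hg x hx).sub_const (g a)).continuousAt.continuousWithinAt)
    (fun x hx => ((hg x (Ico_subset_Icc_self hx)).sub_const (g a)).hasDerivWithinAt)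
    (fun x hx => bound x (Ico_subset_Icc_self hx))

theorem norm_image_sub_le_of_norm_deriv_le_mul_rpow {E : Type*} [NormedAddCommGroup E]
    [NormedSpace ℝ E] {f f' : ℝ → E} {r ν : ℝ → ℝ} {a b q K : ℝ} (hq : 0 < q)
    (hf : ∀ x ∈ Icc a b, HasDerivAt f (f' x) x) (hr : ∀ x ∈ Icc a b, HasDerivAt r (ν x) x)
    (hr_pos : ∀ x ∈ Icc a b, 0 < r x)
    (bound : ∀ x ∈ Icc a b, ‖f' x‖ ≤ K * (-ν x) * r x ^ (-q - 1)) :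
    ∀ x ∈ Icc a b, ‖f x - f a‖ ≤ K / q * (r x ^ (-q) - r a ^ (-q)) := by
  have hg : ∀ x ∈ Icc a b,
      HasDerivAt (fun y => K / q * r y ^ (-q)) (K * (-ν x) * r x ^ (-q - 1)) x := by
    intro x hx
    refine (((hr x hx).rpow_const (Or.inl (hr_pos x hx).ne')).const_mul (K / q)).congr_deriv ?_
    field_simp
  intro x hx
  rw [mul_sub]
  exact norm_image_sub_le_of_norm_deriv_le_deriv hf hg bound x hx

theorem abs_potential_term_le {w κ n ψ r C₀ P : ℝ} (hr : 0 < r) (hκ : 0 ≤ κ) (hκC : κ ≤ C₀)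
    (hw : |w| ≤ C₀) (hn : 0 ≤ n) (hψ : |ψ| ≤ r ^ (-(1/2) : ℝ) * P) :
    |-(2 * w / r ^ 2) * κ * n * ψ| ≤ 2 * C₀ ^ 2 * P * n * r ^ (-(5/2) : ℝ) := by
  have hr52 : r ^ (-(5/2) : ℝ) = r ^ (-(1/2) : ℝ) / r ^ 2 := by
    rw [show (-(5/2) : ℝ) = -(1/2) - (2 : ℕ) by norm_num, Real.rpow_sub hr, Real.rpow_natCast]
  have hC₀ : 0 ≤ C₀ := (abs_nonneg w).trans hw
  calc |-(2 * w / r ^ 2) * κ * n * ψ| = 2 * |w| / r ^ 2 * κ * n * |ψ| := by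
        simp only [abs_mul, abs_neg, abs_div, abs_two, abs_pow, abs_of_pos hr,
          abs_of_nonneg hκ, abs_of_nonneg hn]
    _ ≤ 2 * C₀ / r ^ 2 * C₀ * n * (r ^ (-(1/2) : ℝ) * P) := by gcongr
    _ = 2 * C₀ ^ 2 * P * n * r ^ (-(5/2) : ℝ) := by rw [hr52]; ring

/-- Integrating the wave identity in `u` at fixed `v` (with vanishing wave source): there
is a numerical constant `C` such that if `Φ = ∂_v(rψ)` satisfies
`∂_u Φ = -(2(ϖ - e²/r)/r²) κ (-ν) ψ` on `[1,u]`, with `0 < κ ≤ C₀`,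
`|ϖ - e²/r| ≤ C₀`, `ν = ∂_u r < 0`, `r ≥ r_min > 0`, and `|ψ| ≤ r^{-1/2} P`, then
`|Φ(u)| ≤ |Φ(1)| + C C₀² P r(u)^{-3/2}`. -/
theorem stmt_18 : ∃ C : ℝ, 0 < C ∧
    ∀ (p u C₀ P rmin e2 : ℝ) (Φ ψ r ϖ κ ν : ℝ → ℝ),
      0 < p → 1 ≤ u → 0 < C₀ → 0 < rmin →
      (∀ s ∈ Set.Icc (1 : ℝ) u,
        HasDerivAt Φ (-(2 * (ϖ s - e2 / r s) / (r s) ^ 2) * κ s * (-ν s) * ψ s) s) →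
      (∀ s ∈ Set.Icc (1 : ℝ) u, HasDerivAt r (ν s) s) →
      (∀ s ∈ Set.Icc (1 : ℝ) u, ν s < 0) →
      (∀ s ∈ Set.Icc (1 : ℝ) u, 0 < κ s ∧ κ s ≤ C₀) →
      (∀ s ∈ Set.Icc (1 : ℝ) u, |ϖ s - e2 / r s| ≤ C₀) →
      (∀ s ∈ Set.Icc (1 : ℝ) u, rmin ≤ r s) →
      (∀ s ∈ Set.Icc (1 : ℝ) u, |ψ s| ≤ (r s) ^ (-(1/2) : ℝ) * P) →
      |Φ u| ≤ |Φ 1| + C * C₀ ^ 2 * P * (r u) ^ (-(3/2) : ℝ) := by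
  refine ⟨4 / 3, by norm_num, ?_⟩
  intro p u C₀ P rmin e2 Φ ψ r ϖ κ ν _ hu _ hrmin hΦ hr hν hκ hϖ hr_ge hψ
  have h1 : (1 : ℝ) ∈ Icc 1 u := ⟨le_rfl, hu⟩
  have hr_pos : ∀ s ∈ Icc (1 : ℝ) u, 0 < r s := fun s hs => hrmin.trans_le (hr_ge s hs)
  have hP : 0 ≤ P := nonneg_of_mul_nonneg_right ((abs_nonneg _).trans (hψ 1 h1))
    (Real.rpow_pos_of_pos (hr_pos 1 h1) _)
  have hdiff := norm_image_sub_le_of_norm_deriv_le_mul_rpow (q := 3/2) (by norm_num) hΦ hr hr_pos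
    (fun s hs => by
      rw [Real.norm_eq_abs, show (-(3/2) - 1 : ℝ) = -(5/2) by norm_num]
      exact abs_potential_term_le (hr_pos s hs) (hκ s hs).1.le (hκ s hs).2 (hϖ s hs)
        (neg_nonneg.2 (hν s hs).le) (hψ s hs))
    u ⟨hu, le_rfl⟩
  rw [Real.norm_eq_abs] at hdiff
  have h_initial_nonneg : 0 ≤ C₀ ^ 2 * P * r 1 ^ (-(3/2) : ℝ) :=
    mul_nonneg (by positivity) (Real.rpow_nonneg (hr_pos 1 h1).le _)
  linarith [abs_sub_abs_le_abs_sub (Φ u) (Φ 1)]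
end
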